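/- arXiv:2211.01588 — 2 statements merged into one kernel-verified Lean document; each statement's English description precedes it below -/
import Mathlib

section
/- Suppose L : ℝ^d → ℝ is (a,b)-semi-smooth, i.e. L(U) ≤ L(W) + ⟨∇L(W), U - W⟩ + b‖W - U‖² + a‖W - U‖·L(W)^{1/2} for all W, U, and satisfies the (τ₁, τ₂)-no-critical-point property τ₁²·L(x) ≤ ‖∇L(x)‖² ≤ τ₂²·L(x) with L nonnegative. Assume 0.5τ₁² ≥ aτ₂ and step size η ≤ τ₁²/(10bτ₂²). Then for gradient descent x_{t+1} = x_t - η∇L(x_t) and any minimizer x* of L, L(x_{t+1}) - L(x*) ≤ (1 - 0.1ητ₁²)(L(x_t) - L(x*)). -/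
set_option maxHeartbeats 1000000


open RealInnerProductSpace

theorem semi_smooth_gd_one_step (d : ℕ)
    (L : EuclideanSpace ℝ (Fin d) → ℝ)
    (a b τ₁ τ₂ η : ℝ)
    (hL_nonneg : ∀ x, 0 ≤ L x)
    (ha : 0 < a) (hb : 0 < b) (hτ₁ : 0 < τ₁) (hτ₁' : τ₁ < 1) (hτ₂ : 0 < τ₂)
    (hsemi : ∀ W U, L U ≤ L W + ⟪gradient L W, U - W⟫
        + b * ‖W - U‖ ^ 2 + a * ‖W - U‖ * Real.sqrt (L W))
    (hncp : ∀ x, τ₁ ^ 2 * L x ≤ ‖gradient L x‖ ^ 2 ∧ ‖gradient L x‖ ^ 2 ≤ τ₂ ^ 2 * L x)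
    (hconst : a * τ₂ ≤ 0.5 * τ₁ ^ 2)
    (hη : 0 < η) (hη' : η ≤ τ₁ ^ 2 / (10 * b * τ₂ ^ 2))
    (xstar : EuclideanSpace ℝ (Fin d)) (hmin : ∀ y, L xstar ≤ L y)
    (xt : EuclideanSpace ℝ (Fin d)) :
    L (xt - η • gradient L xt) - L xstar ≤ (1 - 0.1 * η * τ₁ ^ 2) * (L xt - L xstar) := by
  set g := gradient L xt with hg
  set ℓ := L xt with hℓ
  set s := Real.sqrt ℓ with hsdef
  have hℓ0 : 0 ≤ ℓ := hL_nonneg xt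
  have hs0 : 0 ≤ s := Real.sqrt_nonneg _
  have hs2 : s ^ 2 = ℓ := Real.sq_sqrt hℓ0
  obtain ⟨hlo, hhi⟩ := hncp xt
  have key := hsemi xt (xt - η • g)
  have hdiff : (xt - η • g) - xt = -(η • g) := by abel
  have hinner : ⟪g, (xt - η • g) - xt⟫ = -(η * ‖g‖ ^ 2) := by
    rw [hdiff, inner_neg_right, real_inner_smul_right, real_inner_self_eq_norm_sq]
  have hdiff2 : xt - (xt - η • g) = η • g := by abel
  have hnorm : ‖xt - (xt - η • g)‖ = η * ‖g‖ := by
    rw [hdiff2, norm_smul, Real.norm_eq_abs, abs_of_pos hη]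
  rw [hinner, hnorm] at key
  -- bound ‖g‖ ≤ τ₂ * s
  have hgs : ‖g‖ ≤ τ₂ * s := by
    have h1 : ‖g‖ ^ 2 ≤ (τ₂ * s) ^ 2 := by
      rw [mul_pow, hs2]; exact hhi
    exact le_of_pow_le_pow_left₀ two_ne_zero (by positivity) h1
  have hηb : η * (b * τ₂ ^ 2) ≤ τ₁ ^ 2 / 10 := by
    have hpos : (0:ℝ) < 10 * b * τ₂ ^ 2 := by positivity
    rw [le_div_iff₀ hpos] at hη'
    nlinarith
  have hLs : L xstar ≥ 0 := hL_nonneg xstar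
  have hgn : 0 ≤ ‖g‖ := norm_nonneg g
  have hqsl : ‖g‖ * s ≤ τ₂ * ℓ := by
    calc ‖g‖ * s ≤ (τ₂ * s) * s := by nlinarith
    _ = τ₂ * ℓ := by rw [mul_assoc, ← sq, hs2]
  nlinarith [mul_le_mul_of_nonneg_left hlo (le_of_lt hη),
    mul_le_mul_of_nonneg_left hqsl (mul_pos ha hη).le,
    mul_le_mul_of_nonneg_left hhi (by positivity : (0:ℝ) ≤ b * η ^ 2),
    mul_le_mul_of_nonneg_right hηb (mul_nonneg hη.le hℓ0),
    mul_le_mul_of_nonneg_right hconst (mul_nonneg hη.le hℓ0),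
    mul_nonneg (mul_nonneg hη.le (sq_nonneg τ₁)) hLs]
end

section
/- Consider local iterates W_{c,0} = U and W_{c,k+1} = W_{c,k} - η_l∇L_c(W_{c,k}) for K ≥ 2 local steps, where ‖∇L_c(W)‖² ≤ τ₂²L_c(W) and L_c(W_{c,k}) ≤ L_c(U) for all k. Then for every k ≤ K, ‖W_{c,k} - U‖² ≤ 4K²τ₂²η_l²·L_c(U), and consequently the average drift ξ = (1/(KN))∑_{k=1}^K∑_{c=1}^N ‖W_{c,k-1} - U‖² satisfies ξ ≤ 4K²τ₂²η_l²·L(U). -/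
theorem local_drift_bound (d N K : ℕ) (hN : 0 < N) (hK : 2 ≤ K)
    (Lc : Fin N → EuclideanSpace ℝ (Fin d) → ℝ)
    (τ₂ ηl : ℝ) (hηl : 0 < ηl)
    (hLc_nonneg : ∀ c x, 0 ≤ Lc c x)
    (hgrad : ∀ c W, ‖gradient (Lc c) W‖ ^ 2 ≤ τ₂ ^ 2 * Lc c W)
    (L : EuclideanSpace ℝ (Fin d) → ℝ)
    (hL : L = fun x => (1 / (N : ℝ)) * ∑ c, Lc c x)
    (U : EuclideanSpace ℝ (Fin d))
    (W : Fin N → ℕ → EuclideanSpace ℝ (Fin d))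
    (hW0 : ∀ c, W c 0 = U)
    (hWstep : ∀ c k, W c (k + 1) = W c k - ηl • gradient (Lc c) (W c k))
    (hdec : ∀ c k, Lc c (W c k) ≤ Lc c U) :
    (∀ c, ∀ k ≤ K, ‖W c k - U‖ ^ 2 ≤ 4 * K ^ 2 * τ₂ ^ 2 * ηl ^ 2 * Lc c U) ∧
    (1 / ((K : ℝ) * N)) * ∑ k ∈ Finset.range K, ∑ c : Fin N, ‖W c k - U‖ ^ 2
      ≤ 4 * K ^ 2 * τ₂ ^ 2 * ηl ^ 2 * L U := by
  have hX : ∀ c : Fin N, (0:ℝ) ≤ τ₂ ^ 2 * Lc c U := fun c =>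
    mul_nonneg (sq_nonneg _) (hLc_nonneg c U)
  have key : ∀ c, ∀ k : ℕ, ‖W c k - U‖ ≤ k * (ηl * Real.sqrt (τ₂ ^ 2 * Lc c U)) := by
    intro c k
    induction k with
    | zero => simp [hW0 c]
    | succ n ih =>
      have hg : ‖gradient (Lc c) (W c n)‖ ≤ Real.sqrt (τ₂ ^ 2 * Lc c U) := by
        have h1 : ‖gradient (Lc c) (W c n)‖ ^ 2 ≤ τ₂ ^ 2 * Lc c U :=
          le_trans (hgrad c (W c n)) (by nlinarith [hdec c n, sq_nonneg τ₂])
        calc ‖gradient (Lc c) (W c n)‖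
            = Real.sqrt (‖gradient (Lc c) (W c n)‖ ^ 2) := by
              rw [Real.sqrt_sq (norm_nonneg _)]
          _ ≤ Real.sqrt (τ₂ ^ 2 * Lc c U) := Real.sqrt_le_sqrt h1
      have hrw : W c (n+1) - U = (W c n - U) - ηl • gradient (Lc c) (W c n) := by
        rw [hWstep c n]; abel
      rw [hrw]
      have h2 : ‖(W c n - U) - ηl • gradient (Lc c) (W c n)‖
          ≤ ‖W c n - U‖ + ‖ηl • gradient (Lc c) (W c n)‖ := norm_sub_le _ _
      have h3 : ‖ηl • gradient (Lc c) (W c n)‖ ≤ ηl * Real.sqrt (τ₂ ^ 2 * Lc c U) := by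
        rw [norm_smul, Real.norm_eq_abs, abs_of_pos hηl]
        exact mul_le_mul_of_nonneg_left hg hηl.le
      push_cast
      nlinarith [h2, h3, ih]
  have key2 : ∀ c, ∀ k ≤ K, ‖W c k - U‖ ^ 2 ≤ 4 * K ^ 2 * τ₂ ^ 2 * ηl ^ 2 * Lc c U := by
    intro c k hk
    have h1 := key c k
    have h2 : ‖W c k - U‖ ^ 2 ≤ (k * (ηl * Real.sqrt (τ₂ ^ 2 * Lc c U))) ^ 2 := by
      have hnn : (0:ℝ) ≤ k * (ηl * Real.sqrt (τ₂ ^ 2 * Lc c U)) :=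
        mul_nonneg (Nat.cast_nonneg _) (mul_nonneg hηl.le (Real.sqrt_nonneg _))
      exact pow_le_pow_left₀ (norm_nonneg _) h1 2
    have hsq : Real.sqrt (τ₂ ^ 2 * Lc c U) ^ 2 = τ₂ ^ 2 * Lc c U := Real.sq_sqrt (hX c)
    have hkK : (k:ℝ) ≤ K := Nat.cast_le.mpr hk
    have hknn : (0:ℝ) ≤ (k:ℝ) := Nat.cast_nonneg _
    have hk2 : (k:ℝ)^2 ≤ (K:ℝ)^2 := by nlinarith
    have hηX : (0:ℝ) ≤ ηl^2 * (τ₂^2 * Lc c U) := mul_nonneg (sq_nonneg _) (hX c)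
    have h3 : (k:ℝ)^2 * (ηl^2 * (τ₂^2 * Lc c U)) ≤ (K:ℝ)^2 * (ηl^2 * (τ₂^2 * Lc c U)) :=
      mul_le_mul_of_nonneg_right hk2 hηX
    have h2' : ‖W c k - U‖ ^ 2 ≤ (k:ℝ)^2 * (ηl^2 * (τ₂^2 * Lc c U)) := by
      calc ‖W c k - U‖ ^ 2 ≤ ((k:ℝ) * (ηl * Real.sqrt (τ₂ ^ 2 * Lc c U))) ^ 2 := h2
        _ = (k:ℝ)^2 * (ηl^2 * Real.sqrt (τ₂ ^ 2 * Lc c U) ^ 2) := by ring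
        _ = (k:ℝ)^2 * (ηl^2 * (τ₂^2 * Lc c U)) := by rw [hsq]
    nlinarith [h2', h3, mul_nonneg (sq_nonneg (K:ℝ)) hηX]
  refine ⟨key2, ?_⟩
  have hKpos : (0:ℝ) < K := by
    have : (2:ℝ) ≤ K := by exact_mod_cast hK
    linarith
  have hNpos : (0:ℝ) < N := by exact_mod_cast hN
  set B : ℝ := 4 * K ^ 2 * τ₂ ^ 2 * ηl ^ 2 with hB
  have hsum : ∑ k ∈ Finset.range K, ∑ c : Fin N, ‖W c k - U‖ ^ 2
      ≤ (K : ℝ) * ∑ c : Fin N, B * Lc c U := by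
    calc ∑ k ∈ Finset.range K, ∑ c : Fin N, ‖W c k - U‖ ^ 2
        ≤ ∑ k ∈ Finset.range K, ∑ c : Fin N, B * Lc c U := by
          apply Finset.sum_le_sum
          intro k hk
          apply Finset.sum_le_sum
          intro c _
          exact key2 c k (le_of_lt (Finset.mem_range.mp hk))
      _ = (K : ℝ) * ∑ c : Fin N, B * Lc c U := by
          rw [Finset.sum_const, Finset.card_range, nsmul_eq_mul]
  have hfin : (1 / ((K:ℝ) * N)) * ((K : ℝ) * ∑ c : Fin N, B * Lc c U) = B * L U := by
    rw [hL]
    simp only [← Finset.mul_sum]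
    field_simp
  calc (1 / ((K : ℝ) * N)) * ∑ k ∈ Finset.range K, ∑ c : Fin N, ‖W c k - U‖ ^ 2
      ≤ (1 / ((K:ℝ) * N)) * ((K : ℝ) * ∑ c : Fin N, B * Lc c U) := by
        apply mul_le_mul_of_nonneg_left hsum
        positivity
    _ = B * L U := hfin
end
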